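/- Let ρ : 𝕋^d → {−1,+1} be measurable with ∫ ρ dx = 0, let f : 𝕋^d → ℝ be a smooth periodic function, let π ∈ Γ(ρ₊, ρ₋) be any coupling of ρ₊ and ρ₋, and let 0 < r ≤ 1. Then there exists a constant C > 0 depending only on d such that ∫∫_{{d(x,y) < r}} |f(x) − f(y)| / √(d(x,y)) dπ(x,y) ≤ C · √r · ∫_{𝕋^d} |∇f| dx. -/

import Mathlib

open MeasureTheory Real
open scoped ENNReal RealInnerProductSpace

noncomputable section

/-- Euclidean space `ℝ^d`; periodic functions on it model functions on the torus `𝕋^d`. -/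
abbrev Ed (d : ℕ) : Type := EuclideanSpace ℝ (Fin d)

/-- The point of `ℝ^d` associated to an integer vector `n ∈ ℤ^d`. -/
def intVec (d : ℕ) (n : Fin d → ℤ) : Ed d := WithLp.toLp 2 (fun i => (n i : ℝ))

/-- `ℤ^d`-periodicity: the model for functions defined on the torus `𝕋^d = ℝ^d/ℤ^d`. -/
def IsPeriodic {d : ℕ} {α : Type*} (f : Ed d → α) : Prop :=
  ∀ (x : Ed d) (n : Fin d → ℤ), f (x + intVec d n) = f x

/-- The fundamental domain `[0,1)^d` of the torus. -/
def unitBox (d : ℕ) : Set (Ed d) := {x | ∀ i, x i ∈ Set.Ico (0 : ℝ) 1}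

/-- The geodesic (periodic) distance on the torus `𝕋^d`. -/
def perDist {d : ℕ} (x y : Ed d) : ℝ := ⨅ n : Fin d → ℤ, ‖x - y + intVec d n‖

/-- `ρ₊ = 2 max(ρ,0)`. -/
def rhoPlus {d : ℕ} (ρ : Ed d → ℝ) : Ed d → ℝ := fun x => 2 * max (ρ x) 0

/-- `ρ₋ = -2 min(ρ,0)`. -/
def rhoMinus {d : ℕ} (ρ : Ed d → ℝ) : Ed d → ℝ := fun x => -(2 * min (ρ x) 0)

/-- `γ` is a coupling (transport plan) between the probability densities `ρ₀, ρ₁` on the torus. -/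
def IsCoupling {d : ℕ} (ρ₀ ρ₁ : Ed d → ℝ) (γ : Measure (Ed d × Ed d)) : Prop :=
  IsProbabilityMeasure γ ∧
  γ.map Prod.fst
    = (volume.restrict (unitBox d)).withDensity (fun x => ENNReal.ofReal (ρ₀ x)) ∧
  γ.map Prod.snd
    = (volume.restrict (unitBox d)).withDensity (fun y => ENNReal.ofReal (ρ₁ y))

/-- The Monge–Kantorovich–Rubinstein distance with cost function `σ`. -/
def MKRDist {d : ℕ} (σ : ℝ → ℝ) (ρ₀ ρ₁ : Ed d → ℝ) : ℝ :=
  sInf { c | ∃ γ : Measure (Ed d × Ed d), IsCoupling ρ₀ ρ₁ γ ∧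
    c = ∫ q, σ (perDist q.1 q.2) ∂γ }

/-- The MKR mixing measure `D(ρ) = exp (d_ln (ρ₊, ρ₋))`. -/
def mixD {d : ℕ} (ρ : Ed d → ℝ) : ℝ :=
  Real.exp (MKRDist Real.log (rhoPlus ρ) (rhoMinus ρ))

/-- The homogeneous `Ḣ^{-1}` norm on the torus. -/
def negSob {d : ℕ} (ρ : Ed d → ℝ) : ℝ :=
  sSup { c | ∃ ζ : Ed d → ℝ, ContDiff ℝ (⊤ : ℕ∞) ζ ∧ IsPeriodic ζ ∧
    (∫ x in unitBox d, ‖gradient ζ x‖ ^ 2) ≤ 1 ∧ c = ∫ x in unitBox d, ρ x * ζ x }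

/-- The divergence of a vector field on `ℝ^d`. -/
def divg {d : ℕ} (ζ : Ed d → Ed d) (x : Ed d) : ℝ :=
  ∑ i, fderiv ℝ ζ x (EuclideanSpace.single i (1 : ℝ)) i

/-- The set of test values defining the `BV` seminorm. -/
def bvSet {d : ℕ} (ρ : Ed d → ℝ) : Set ℝ :=
  { c | ∃ ζ : Ed d → Ed d, ContDiff ℝ 1 ζ ∧ IsPeriodic ζ ∧ (∀ x, ‖ζ x‖ ≤ 1) ∧
      c = ∫ x in unitBox d, ρ x * divg ζ x }

/-- The total variation (`BV`) seminorm `[ρ]_{BV}` on the torus. -/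
def bvNorm {d : ℕ} (ρ : Ed d → ℝ) : ℝ := sSup (bvSet ρ)

/-- `[ρ]_{BV} < ∞`. -/
def HasFiniteBV {d : ℕ} (ρ : Ed d → ℝ) : Prop := BddAbove (bvSet ρ)

/-- `ρ` is a distributional (weak) solution of `∂ₜ ρ + u ⋅ ∇ρ = 0` on `(0,∞) × 𝕋^d`
with initial datum `ρ(0,⋅)` (for divergence-free `u` this is the weak formulation of the
continuity equation, tested against smooth periodic test functions vanishing for large times). -/
def IsWeakSolution {d : ℕ} (u : ℝ → Ed d → Ed d) (ρ : ℝ → Ed d → ℝ) : Prop :=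
  ∀ φ : ℝ → Ed d → ℝ,
    ContDiff ℝ (⊤ : ℕ∞) (fun q : ℝ × Ed d => φ q.1 q.2) →
    (∀ t, IsPeriodic (φ t)) →
    (∃ T : ℝ, ∀ t ≥ T, ∀ x, φ t x = 0) →
    (∫ t in Set.Ioi (0 : ℝ), ∫ x in unitBox d,
        ρ t x * (deriv (fun s => φ s x) t + (inner ℝ (u t x) (gradient (φ t) x) : ℝ)))
      + (∫ x in unitBox d, ρ 0 x * φ 0 x) = 0

/-- The viscous dissipation `‖∇u(t,⋅)‖_{L^p(𝕋^d)}` at time `t`. -/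
def dissip {d : ℕ} (p : ℝ≥0∞) (u : ℝ → Ed d → Ed d) (t : ℝ) : ℝ :=
  (eLpNorm (fun x => fderiv ℝ (u t) x) p (volume.restrict (unitBox d))).toReal

/-- The weighted local maximal function `M_r^τ g`. -/
def wMax {d : ℕ} (r τ : ℝ) (g : Ed d → ℝ) (x : Ed d) : ℝ :=
  ⨆ q : Set.Ioo (0 : ℝ) r,
    (volume (Metric.ball (0 : Ed d) q)).toReal⁻¹ *
      ∫ z in Metric.ball (0 : Ed d) (q : ℝ), ‖z‖ ^ (τ : ℝ) * g (x + z)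

/-- The (periodic) ball of radius `Q` around `x`, realized inside the fundamental domain
centered at `x` (on which the periodic distance agrees with the Euclidean one). -/
def pBall {d : ℕ} (x : Ed d) (Q : ℝ) : Set (Ed d) :=
  {z | (∀ i, |z i - x i| ≤ 1 / 2) ∧ perDist x z < Q}

/-- Mollification `ρ_R = ρ * φ_R` at scale `R`, with `φ_R(z) = R^{-d} φ(z/R)`. -/
def mollify {d : ℕ} (φ ρ : Ed d → ℝ) (R : ℝ) (x : Ed d) : ℝ :=
  ∫ z, ((R ^ d)⁻¹ * φ (R⁻¹ • z)) * ρ (x - z)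

section Aux
variable {d : ℕ}

/-- The standard basis of `Ed d`. -/
def bd (d : ℕ) : Module.Basis (Fin d) ℝ (Ed d) := (EuclideanSpace.basisFun (Fin d) ℝ).toBasis

/-- The integer lattice in `Ed d`. -/
abbrev Ld (d : ℕ) := Submodule.span ℤ (Set.range ⇑(bd d))

instance : MeasurableVAdd (Ld d) (Ed d) :=
  { measurable_const_vadd := fun c => measurable_const_add (c : Ed d)
    measurable_vadd_const := fun x => (measurable_subtype_coe).add_const x }

instance : VAddInvariantMeasure (Ld d) (Ed d) volume :=
  ⟨fun c s _ => by
    show volume ((fun x => (c : Ed d) + x) ⁻¹' s) = volume s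
    exact measure_preimage_add volume _ s⟩

lemma mem_Ld_iff {l : Ed d} : l ∈ Ld d ↔ ∃ n : Fin d → ℤ, l = intVec d n := by
  rw [Module.Basis.mem_span_iff_repr_mem]
  constructor
  · intro h
    choose n hn using h
    refine ⟨n, PiLp.ext fun i => ?_⟩
    have := hn i
    simpa [bd, intVec] using this.symm
  · rintro ⟨n, rfl⟩ i
    exact ⟨n i, by simp [bd, intVec]⟩

lemma unitBox_eq_fd : unitBox d = ZSpan.fundamentalDomain (bd d) := by
  ext x
  simp [ZSpan.mem_fundamentalDomain, unitBox, bd]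

lemma measurableSet_unitBox : MeasurableSet (unitBox d) := by
  have : unitBox d = ⋂ i, (fun x : Ed d => x i) ⁻¹' Set.Ico (0:ℝ) 1 := by
    ext x; simp [unitBox]
  rw [this]
  exact MeasurableSet.iInter fun i =>
    ((EuclideanSpace.proj (𝕜 := ℝ) i).continuous.measurable) measurableSet_Ico

/-- Translation invariance of integrals of periodic functions over the unit box. -/
lemma lintegral_unitBox_translate (G : Ed d → ℝ≥0∞) (hG : Measurable G)
    (hper : ∀ (x : Ed d) (n : Fin d → ℤ), G (x + intVec d n) = G x) (a : Ed d) :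
    ∫⁻ x in unitBox d, G (x + a) = ∫⁻ x in unitBox d, G x := by
  have hinv : ∀ (g : Ld d) (x : Ed d), G (g +ᵥ x) = G x := by
    rintro ⟨l, hl⟩ x
    obtain ⟨n, rfl⟩ := mem_Ld_iff.mp hl
    show G (intVec d n + x) = G x
    rw [add_comm]; exact hper x n
  have hfd : IsAddFundamentalDomain (Ld d) (unitBox d) (volume : Measure (Ed d)) := by
    rw [unitBox_eq_fd]; exact ZSpan.isAddFundamentalDomain (bd d) _
  set s : Set (Ed d) := (fun y => y - a) ⁻¹' unitBox d with hs
  have hsm : MeasurableSet s :=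
    (measurable_id.sub_const a) measurableSet_unitBox
  have hfd' : IsAddFundamentalDomain (Ld d) s (volume : Measure (Ed d)) := by
    apply IsAddFundamentalDomain.mk' hsm.nullMeasurableSet
    intro x
    have h1 := (unitBox_eq_fd (d := d)) ▸ ZSpan.exist_unique_vadd_mem_fundamentalDomain (bd d) (x - a)
    obtain ⟨g, hg, hgu⟩ := h1
    refine ⟨g, ?_, fun g' hg' => hgu g' ?_⟩
    · show (g : Ed d) + x ∈ s
      simpa [hs, Set.mem_preimage, add_sub_assoc, Submodule.vadd_def, vadd_eq_add] using hg
    · have : (g' : Ed d) + x ∈ s := hg'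
      simpa [hs, Set.mem_preimage, add_sub_assoc, Submodule.vadd_def, vadd_eq_add] using this
  have step1 : ∫⁻ x in unitBox d, G (x + a) = ∫⁻ y in s, G y := by
    have hmp : MeasurePreserving (fun x : Ed d => x + a) volume volume :=
      measurePreserving_add_right volume a
    have hemb : MeasurableEmbedding (fun x : Ed d => x + a) :=
      (Homeomorph.addRight a).measurableEmbedding
    have hpre : (fun x : Ed d => x + a) ⁻¹' s = unitBox d := by
      ext x; simp [hs, Set.mem_preimage]
    rw [← hpre]
    exact hmp.setLIntegral_comp_preimage_emb hemb G s
  rw [step1]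
  exact hfd'.setLIntegral_eq hfd G hinv

end Aux
section Aux2
variable {d : ℕ}

lemma perDist_nonneg (x y : Ed d) : 0 ≤ perDist x y :=
  le_ciInf fun n => norm_nonneg _

lemma exists_intVec_of_perDist_lt {x y : Ed d} {δ : ℝ} (h : perDist x y < δ) :
    ∃ n : Fin d → ℤ, ‖x - y + intVec d n‖ < δ :=
  exists_lt_of_ciInf_lt h

lemma perDist_bddBelow (x y : Ed d) :
    BddBelow (Set.range fun n : Fin d → ℤ => ‖x - y + intVec d n‖) :=
  ⟨0, by rintro _ ⟨n, rfl⟩; exact norm_nonneg _⟩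

lemma perDist_le (x y : Ed d) (n : Fin d → ℤ) : perDist x y ≤ ‖x - y + intVec d n‖ :=
  ciInf_le (perDist_bddBelow x y) n

lemma lipschitz_perDist_aux (v w : Ed d) :
    perDist v 0 ≤ perDist w 0 + ‖v - w‖ := by
  have h : perDist v 0 - ‖v - w‖ ≤ perDist w 0 := by
    apply le_ciInf
    intro n
    have h1 : perDist v 0 ≤ ‖v - 0 + intVec d n‖ := perDist_le v 0 n
    have h2 : ‖v - 0 + intVec d n‖ ≤ ‖w - 0 + intVec d n‖ + ‖v - w‖ := by
      have he : v - 0 + intVec d n = (w - 0 + intVec d n) + (v - w) := by abel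
      rw [he]; exact norm_add_le _ _
    linarith
  linarith

lemma perDist_eq_sub (x y : Ed d) : perDist x y = perDist (x - y) 0 := by
  simp [perDist]

lemma continuous_perDist : Continuous fun q : Ed d × Ed d => perDist q.1 q.2 := by
  have hlip : LipschitzWith 1 (fun v : Ed d => perDist v 0) := by
    apply LipschitzWith.of_dist_le_mul
    intro v w
    rw [Real.dist_eq]
    rw [show ((1:NNReal):ℝ) * dist v w = dist v w by simp]
    rw [dist_eq_norm, abs_sub_le_iff]
    constructor
    · have := lipschitz_perDist_aux v w
      linarith
    · have := lipschitz_perDist_aux w v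
      rw [norm_sub_rev] at this
      linarith
  have : (fun q : Ed d × Ed d => perDist q.1 q.2)
      = (fun v : Ed d => perDist v 0) ∘ (fun q : Ed d × Ed d => q.1 - q.2) := by
    funext q; simp [perDist_eq_sub]
  rw [this]
  exact hlip.continuous.comp (continuous_fst.sub continuous_snd)

lemma norm_gradient_eq {f : Ed d → ℝ} (x : Ed d) : ‖gradient f x‖ = ‖fderiv ℝ f x‖ := by
  unfold gradient
  simp [LinearIsometryEquiv.norm_map]

lemma continuous_norm_gradient {f : Ed d → ℝ} (hf : ContDiff ℝ (⊤ : ℕ∞) f) :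
    Continuous fun x => ‖gradient f x‖ := by
  have : Continuous (fderiv ℝ f) := hf.continuous_fderiv (by simp)
  have : Continuous fun x => ‖fderiv ℝ f x‖ := this.norm
  simpa only [norm_gradient_eq] using this

lemma fderiv_periodic {f : Ed d → ℝ} (hf : ContDiff ℝ (⊤ : ℕ∞) f) (hp : IsPeriodic f)
    (x : Ed d) (n : Fin d → ℤ) : fderiv ℝ f (x + intVec d n) = fderiv ℝ f x := by
  have h1 : HasFDerivAt (fun y : Ed d => f (y + intVec d n))
      ((fderiv ℝ f (x + intVec d n)).comp (ContinuousLinearMap.id ℝ (Ed d))) x := by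
    exact (hf.differentiable (by simp) (x + intVec d n)).hasFDerivAt.comp x
      ((hasFDerivAt_id x).add_const (intVec d n))
  have h2 : (fun y : Ed d => f (y + intVec d n)) = f := funext fun y => hp y n
  rw [h2, ContinuousLinearMap.comp_id] at h1
  exact (h1.fderiv).symm

lemma norm_gradient_periodic {f : Ed d → ℝ} (hf : ContDiff ℝ (⊤ : ℕ∞) f) (hp : IsPeriodic f) :
    ∀ (x : Ed d) (n : Fin d → ℤ), ‖gradient f (x + intVec d n)‖ = ‖gradient f x‖ := by
  intro x n
  rw [norm_gradient_eq, norm_gradient_eq, fderiv_periodic hf hp x n]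

/-- A continuous periodic real function is bounded above. -/
lemma periodic_bounded {g : Ed d → ℝ} (hg : Continuous g)
    (hp : ∀ (x : Ed d) (n : Fin d → ℤ), g (x + intVec d n) = g x) :
    ∃ K : ℝ, 0 ≤ K ∧ ∀ x, g x ≤ K := by
  set C : Set (Ed d) := {y : Ed d | ∀ i, y i ∈ Set.Icc (0:ℝ) 1} with hC
  have hclosed : IsClosed C := by
    have : C = ⋂ i, (fun y : Ed d => y i) ⁻¹' Set.Icc (0:ℝ) 1 := by ext y; simp [hC]
    rw [this]
    exact isClosed_iInter fun i =>
      isClosed_Icc.preimage (EuclideanSpace.proj (𝕜 := ℝ) i).continuous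
  have hbdd : Bornology.IsBounded C := by
    apply Bornology.IsBounded.subset (Metric.isBounded_closedBall (x := (0 : Ed d)) (r := d))
    intro y hy
    simp only [Metric.mem_closedBall, dist_zero_right]
    have h1 : ‖y‖ ≤ Real.sqrt d := by
      rw [EuclideanSpace.norm_eq]
      apply Real.sqrt_le_sqrt
      calc (∑ i, ‖y i‖^2) ≤ ∑ _i : Fin d, 1 := by
            apply Finset.sum_le_sum
            intro i _
            have := hy i
            have h0 : |y i| ≤ 1 := by
              rw [abs_le]; constructor <;> [linarith [this.1]; linarith [this.2]]
            calc ‖y i‖^2 = |y i|^2 := rfl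
              _ ≤ 1^2 := by apply pow_le_pow_left₀ (abs_nonneg _) h0
              _ = 1 := one_pow 2
        _ = d := by simp
    refine h1.trans ?_
    calc Real.sqrt d ≤ Real.sqrt (d^2) := by
          apply Real.sqrt_le_sqrt
          have : (1:ℝ) ≤ d ∨ (d:ℝ) = 0 := by
            rcases Nat.eq_zero_or_pos d with h | h
            · right; simp [h]
            · left; exact_mod_cast h
          rcases this with h | h
          · nlinarith
          · simp [h]
      _ = d := by rw [Real.sqrt_sq (Nat.cast_nonneg d)]
  have hcomp : IsCompact C := Metric.isCompact_of_isClosed_isBounded hclosed hbdd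
  have hne : C.Nonempty := ⟨0, fun i => by simp⟩
  obtain ⟨z, _, hz⟩ := hcomp.exists_isMaxOn hne hg.continuousOn
  refine ⟨max (g z) 0, le_max_right _ _, fun x => ?_⟩
  have hx : x + intVec d (fun i => -⌊x i⌋) ∈ C := by
    intro i
    have : (x + intVec d (fun i => -⌊x i⌋)) i = Int.fract (x i) := by
      simp only [PiLp.add_apply, intVec, PiLp.toLp_apply]
      rw [Int.fract]; push_cast; ring
    rw [this]
    exact ⟨Int.fract_nonneg _, (Int.fract_lt_one _).le⟩
  calc g x = g (x + intVec d (fun i => -⌊x i⌋)) := (hp x _).symm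
    _ ≤ g z := hz hx
    _ ≤ max (g z) 0 := le_max_left _ _

end Aux2
section Aux3
variable {d : ℕ}

lemma line_hasDerivAt (x v : Ed d) (t : ℝ) :
    HasDerivAt (fun s : ℝ => x + s • v) v t := by
  have h1 : HasDerivAt (fun s : ℝ => s • v) ((1:ℝ) • v) t := (hasDerivAt_id t).smul_const v
  simpa using h1.const_add x

lemma ftc_bound {f : Ed d → ℝ} (hf : ContDiff ℝ (⊤ : ℕ∞) f) (x v : Ed d) :
    |f (x + v) - f x| ≤ ∫ t in (0:ℝ)..1, ‖gradient f (x + t • v)‖ * ‖v‖ := by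
  have hderiv : ∀ t ∈ Set.uIcc (0:ℝ) 1,
      HasDerivAt (fun s => f (x + s • v)) ((fderiv ℝ f (x + t • v)) v) t := by
    intro t _
    exact ((hf.differentiable (by simp) (x + t • v)).hasFDerivAt).comp_hasDerivAt t
      (line_hasDerivAt x v t)
  have hcont : Continuous fun t : ℝ => (fderiv ℝ f (x + t • v)) v := by
    apply (hf.continuous_fderiv (by simp)).comp (by continuity : Continuous fun t : ℝ => x + t • v)
      |>.clm_apply continuous_const
  have hint : IntervalIntegrable (fun t : ℝ => (fderiv ℝ f (x + t • v)) v)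
      volume 0 1 := hcont.intervalIntegrable 0 1
  have heq : ∫ t in (0:ℝ)..1, (fderiv ℝ f (x + t • v)) v = f (x + v) - f x := by
    have := intervalIntegral.integral_eq_sub_of_hasDerivAt hderiv hint
    simpa using this
  rw [← heq, ← Real.norm_eq_abs]
  have hline : Continuous fun t : ℝ => x + t • v := by continuity
  have hi1 : IntervalIntegrable (fun t : ℝ => ‖(fderiv ℝ f (x + t • v)) v‖) volume 0 1 :=
    (hcont.norm).intervalIntegrable 0 1
  have hi2 : IntervalIntegrable (fun t : ℝ => ‖gradient f (x + t • v)‖ * ‖v‖) volume 0 1 :=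
    (((continuous_norm_gradient hf).comp hline).mul continuous_const).intervalIntegrable 0 1
  calc ‖∫ t in (0:ℝ)..1, (fderiv ℝ f (x + t • v)) v‖
      ≤ ∫ t in (0:ℝ)..1, ‖(fderiv ℝ f (x + t • v)) v‖ :=
        intervalIntegral.norm_integral_le_integral_norm zero_le_one
    _ ≤ ∫ t in (0:ℝ)..1, ‖gradient f (x + t • v)‖ * ‖v‖ := by
        apply intervalIntegral.integral_mono_on zero_le_one hi1 hi2
        intro t _
        rw [norm_gradient_eq]
        exact (fderiv ℝ f (x + t • v)).le_opNorm v

lemma ftc_bound_const {f : Ed d → ℝ} (hf : ContDiff ℝ (⊤ : ℕ∞) f) {K : ℝ}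
    (hK : ∀ y, ‖gradient f y‖ ≤ K) (x v : Ed d) :
    |f (x + v) - f x| ≤ K * ‖v‖ := by
  refine (ftc_bound hf x v).trans ?_
  have hline : Continuous fun t : ℝ => x + t • v := by continuity
  have hi2 : IntervalIntegrable (fun t : ℝ => ‖gradient f (x + t • v)‖ * ‖v‖) volume 0 1 :=
    (((continuous_norm_gradient hf).comp hline).mul continuous_const).intervalIntegrable 0 1
  have step : (∫ t in (0:ℝ)..1, ‖gradient f (x + t • v)‖ * ‖v‖)
      ≤ ∫ _t in (0:ℝ)..1, K * ‖v‖ := by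
    apply intervalIntegral.integral_mono_on zero_le_one hi2 intervalIntegrable_const
    intro t _
    exact mul_le_mul_of_nonneg_right (hK _) (norm_nonneg v)
  simpa using step

lemma eq_of_perDist_eq_zero {f : Ed d → ℝ} (hf : ContDiff ℝ (⊤ : ℕ∞) f) (hp : IsPeriodic f)
    {x y : Ed d} (h : perDist x y = 0) : f x = f y := by
  obtain ⟨K, hK0, hK⟩ := periodic_bounded (continuous_norm_gradient hf)
    (norm_gradient_periodic hf hp)
  have key : ∀ ε > 0, |f x - f y| ≤ K * ε := by
    intro ε hε
    obtain ⟨n, hn⟩ := exists_intVec_of_perDist_lt (h ▸ hε : perDist x y < ε)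
    have hxy : f x = f (y + (x - y + intVec d n)) := by
      have : y + (x - y + intVec d n) = x + intVec d n := by abel
      rw [this, hp x n]
    have := ftc_bound_const hf hK y (x - y + intVec d n)
    rw [← hxy] at this
    exact this.trans (mul_le_mul_of_nonneg_left hn.le hK0)
  by_contra hne
  have habs : 0 < |f x - f y| := abs_pos.mpr (sub_ne_zero.mpr hne)
  have hlt : K / (2 * (K + 1)) < 1 := by
    rw [div_lt_one (by positivity)]; linarith
  have hthis := key (|f x - f y| / (2 * (K + 1))) (by positivity)
  have heq2 : K * (|f x - f y| / (2 * (K + 1))) = (K / (2 * (K + 1))) * |f x - f y| := by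
    ring
  rw [heq2] at hthis
  nlinarith [habs, hlt, hthis]

end Aux3
section Aux4
variable {d : ℕ}

lemma integrableOn_ball_of_continuous {g : Ed d → ℝ} (hg : Continuous g) (c : Ed d) (R : ℝ) :
    MeasureTheory.IntegrableOn g (Metric.ball c R) volume :=
  (hg.continuousOn.integrableOn_compact (isCompact_closedBall c R)).mono_set
    Metric.ball_subset_closedBall

lemma reflect_lintegral (G : Ed d → ℝ≥0∞) (c : Ed d) (R : ℝ) :
    ∫⁻ z in Metric.ball (0:Ed d) R, G (c - z) = ∫⁻ u in Metric.ball c R, G u := by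
  have hmp : MeasurePreserving (fun u : Ed d => c - u) volume volume :=
    Measure.measurePreserving_sub_left volume c
  have hemb : MeasurableEmbedding (fun u : Ed d => c - u) :=
    (Homeomorph.subLeft c).measurableEmbedding
  have hpre : (fun u : Ed d => c - u) ⁻¹' (Metric.ball c R) = Metric.ball (0:Ed d) R := by
    ext u
    simp only [Set.mem_preimage, Metric.mem_ball, dist_eq_norm, sub_zero]
    rw [show c - u - c = -u by abel, norm_neg]
  rw [← hpre]
  exact hmp.setLIntegral_comp_preimage_emb hemb G (Metric.ball c R)

lemma ofReal_abs_sub_le {f : Ed d → ℝ} (hf : ContDiff ℝ (⊤ : ℕ∞) f) (x v : Ed d) :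
    ENNReal.ofReal |f (x + v) - f x|
      ≤ ENNReal.ofReal ‖v‖ *
        ∫⁻ t in Set.Ioc (0:ℝ) 1, ENNReal.ofReal ‖gradient f (x + t • v)‖ := by
  have hline : Continuous fun t : ℝ => x + t • v := by continuity
  have hcont : Continuous fun t : ℝ => ‖gradient f (x + t • v)‖ * ‖v‖ :=
    ((continuous_norm_gradient hf).comp hline).mul continuous_const
  have hi : MeasureTheory.IntegrableOn (fun t : ℝ => ‖gradient f (x + t • v)‖ * ‖v‖)
      (Set.Ioc (0:ℝ) 1) volume :=
    (hcont.continuousOn.integrableOn_compact isCompact_Icc).mono_set Set.Ioc_subset_Icc_self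
  calc ENNReal.ofReal |f (x + v) - f x|
      ≤ ENNReal.ofReal (∫ t in (0:ℝ)..1, ‖gradient f (x + t • v)‖ * ‖v‖) :=
        ENNReal.ofReal_le_ofReal (ftc_bound hf x v)
    _ = ENNReal.ofReal (∫ t in Set.Ioc (0:ℝ) 1, ‖gradient f (x + t • v)‖ * ‖v‖) := by
        rw [intervalIntegral.integral_of_le zero_le_one]
    _ = ∫⁻ t in Set.Ioc (0:ℝ) 1, ENNReal.ofReal (‖gradient f (x + t • v)‖ * ‖v‖) := by
        rw [MeasureTheory.ofReal_integral_eq_lintegral_ofReal hi]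
        exact Filter.Eventually.of_forall fun t =>
          mul_nonneg (norm_nonneg _) (norm_nonneg _)
    _ = ∫⁻ t in Set.Ioc (0:ℝ) 1,
          ENNReal.ofReal ‖v‖ * ENNReal.ofReal ‖gradient f (x + t • v)‖ := by
        congr 1; funext t
        rw [mul_comm, ENNReal.ofReal_mul (norm_nonneg v)]
    _ = ENNReal.ofReal ‖v‖ *
          ∫⁻ t in Set.Ioc (0:ℝ) 1, ENNReal.ofReal ‖gradient f (x + t • v)‖ := by
        rw [MeasureTheory.lintegral_const_mul]
        exact (ENNReal.measurable_ofReal.comp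
          ((continuous_norm_gradient hf).comp hline).measurable)

end Aux4
section Aux5
variable {d : ℕ}

/-- Auxiliary segment-average integral. -/
def Aint (d : ℕ) (f : Ed d → ℝ) (δ : ℝ) (x : Ed d) : ℝ≥0∞ :=
  ∫⁻ p, ENNReal.ofReal ‖gradient f (x - p.2 • p.1)‖
    ∂((volume.restrict (Metric.ball (0:Ed d) δ)).prod (volume.restrict (Set.Ioc (0:ℝ) 1)))

/-- Auxiliary enlarged-ball integral. -/
def Mint (d : ℕ) (f : Ed d → ℝ) (δ : ℝ) (x : Ed d) : ℝ≥0∞ :=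
  ∫⁻ w in Metric.ball (0:Ed d) (2*δ), ENNReal.ofReal ‖gradient f (x - w)‖

lemma measurable_G {f : Ed d → ℝ} (hf : ContDiff ℝ (⊤ : ℕ∞) f) :
    Measurable fun x : Ed d => ENNReal.ofReal ‖gradient f x‖ :=
  ENNReal.measurable_ofReal.comp (continuous_norm_gradient hf).measurable

lemma measurable_Aint {f : Ed d → ℝ} (hf : ContDiff ℝ (⊤ : ℕ∞) f) (δ : ℝ) :
    Measurable (Aint d f δ) := by
  apply Measurable.lintegral_prod_right
    (f := fun (x : Ed d) (p : Ed d × ℝ) => ENNReal.ofReal ‖gradient f (x - p.2 • p.1)‖)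
  exact (measurable_G hf).comp
    (continuous_fst.sub ((continuous_snd.snd).smul continuous_snd.fst)).measurable

lemma measurable_Mint {f : Ed d → ℝ} (hf : ContDiff ℝ (⊤ : ℕ∞) f) (δ : ℝ) :
    Measurable (Mint d f δ) := by
  apply Measurable.lintegral_prod_right
    (f := fun (x : Ed d) (w : Ed d) => ENNReal.ofReal ‖gradient f (x - w)‖)
  exact (measurable_G hf).comp (continuous_fst.sub continuous_snd).measurable

lemma Aint_eq_iterated {f : Ed d → ℝ} (hf : ContDiff ℝ (⊤ : ℕ∞) f) (δ : ℝ) (x : Ed d) :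
    Aint d f δ x = ∫⁻ z in Metric.ball (0:Ed d) δ, ∫⁻ t in Set.Ioc (0:ℝ) 1,
      ENNReal.ofReal ‖gradient f (x - t • z)‖ := by
  rw [Aint]
  exact lintegral_prod _ ((measurable_G hf).comp
    (continuous_const.sub (continuous_snd.smul continuous_fst)).measurable).aemeasurable

end Aux5
section Aux6
variable {d : ℕ}

lemma pointwise_key {f : Ed d → ℝ} (hf : ContDiff ℝ (⊤ : ℕ∞) f) (hfp : IsPeriodic f)
    {δ : ℝ} (hδ : 0 < δ) {x y : Ed d} (hq : perDist x y < δ) :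
    ENNReal.ofReal |f x - f y| ≤ (volume (Metric.ball (0:Ed d) δ))⁻¹ *
      (ENNReal.ofReal δ * (Aint d f δ x + Mint d f δ x + Aint d f δ y)) := by
  set B := Metric.ball (0:Ed d) δ with hB
  set κ := volume B with hκ
  have hκ0 : κ ≠ 0 := (Metric.measure_ball_pos volume 0 hδ).ne'
  have hκtop : κ ≠ ⊤ := measure_ball_lt_top.ne
  have hκR : (0:ℝ) < κ.toReal := ENNReal.toReal_pos hκ0 hκtop
  obtain ⟨n, hn⟩ := exists_intVec_of_perDist_lt hq
  set h : Ed d := -(x - y + intVec d n) with hh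
  have hnorm : ‖h‖ < δ := by rw [hh, norm_neg]; exact hn
  have hcf : Continuous f := hf.continuous
  -- the three continuous pieces
  set a1 : Ed d → ℝ := fun z => |f x - f (x - z)| with ha1
  set a2 : Ed d → ℝ := fun z => |f (x - z) - f (x - z + h)| with ha2
  set a3 : Ed d → ℝ := fun z => |f (x - z + h) - f y| with ha3
  have hc1 : Continuous a1 := (continuous_const.sub (hcf.comp (continuous_const.sub continuous_id))).abs
  have hc2 : Continuous a2 :=
    ((hcf.comp (continuous_const.sub continuous_id)).sub
      (hcf.comp ((continuous_const.sub continuous_id).add continuous_const))).abs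
  have hc3 : Continuous a3 :=
    ((hcf.comp ((continuous_const.sub continuous_id).add continuous_const)).sub continuous_const).abs
  have hint : MeasureTheory.IntegrableOn (fun z => a1 z + a2 z + a3 z) B volume :=
    integrableOn_ball_of_continuous ((hc1.add hc2).add hc3) 0 δ
  -- triangle inequality pointwise
  have trig : ∀ z : Ed d, |f x - f y| ≤ a1 z + a2 z + a3 z := by
    intro z
    have t1 : |f x - f (x - z + h)| ≤ a1 z + a2 z := abs_sub_le _ _ _
    have t2 : |f x - f y| ≤ |f x - f (x - z + h)| + a3 z := abs_sub_le _ _ _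
    linarith
  -- real-level averaging
  have hstep1 : |f x - f y| ≤ κ.toReal⁻¹ * ∫ z in B, (a1 z + a2 z + a3 z) := by
    have h1 : κ.toReal * |f x - f y| ≤ ∫ z in B, (a1 z + a2 z + a3 z) := by
      have hconst : ∫ z in B, |f x - f y| ∂volume = κ.toReal * |f x - f y| := by
        rw [setIntegral_const]; simp [hκ, smul_eq_mul, Measure.real]
      rw [← hconst]
      exact setIntegral_mono_on (integrableOn_const measure_ball_lt_top.ne)
        hint measurableSet_ball (fun z _ => trig z)
    calc |f x - f y| = κ.toReal⁻¹ * (κ.toReal * |f x - f y|) := by field_simp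
      _ ≤ κ.toReal⁻¹ * ∫ z in B, (a1 z + a2 z + a3 z) := by
          exact mul_le_mul_of_nonneg_left h1 (inv_nonneg.mpr hκR.le)
  -- pass to ENNReal
  have hnn : 0 ≤ᵐ[volume.restrict B] fun z => a1 z + a2 z + a3 z :=
    Filter.Eventually.of_forall fun z => by positivity
  have e1 : ENNReal.ofReal |f x - f y|
      ≤ κ⁻¹ * ∫⁻ z in B, ENNReal.ofReal (a1 z + a2 z + a3 z) := by
    have := ENNReal.ofReal_le_ofReal hstep1
    rw [ENNReal.ofReal_mul (inv_nonneg.mpr hκR.le)] at this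
    rwa [ENNReal.ofReal_inv_of_pos hκR, ENNReal.ofReal_toReal hκtop,
      MeasureTheory.ofReal_integral_eq_lintegral_ofReal hint hnn] at this
  -- split into three lintegrals
  have hsplit : (∫⁻ z in B, ENNReal.ofReal (a1 z + a2 z + a3 z))
      = (∫⁻ z in B, ENNReal.ofReal (a1 z)) + (∫⁻ z in B, ENNReal.ofReal (a2 z))
        + (∫⁻ z in B, ENNReal.ofReal (a3 z)) := by
    have hpt : ∀ z : Ed d, ENNReal.ofReal (a1 z + a2 z + a3 z)
        = ENNReal.ofReal (a1 z) + ENNReal.ofReal (a2 z) + ENNReal.ofReal (a3 z) := by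
      intro z
      rw [ENNReal.ofReal_add (by positivity) (by positivity),
        ENNReal.ofReal_add (by positivity) (by positivity)]
    simp_rw [hpt]
    rw [MeasureTheory.lintegral_add_left
        (f := fun z => ENNReal.ofReal (a1 z) + ENNReal.ofReal (a2 z))
        ((ENNReal.measurable_ofReal.comp hc1.measurable).add
          (ENNReal.measurable_ofReal.comp hc2.measurable)),
      MeasureTheory.lintegral_add_left (f := fun z => ENNReal.ofReal (a1 z))
        (ENNReal.measurable_ofReal.comp hc1.measurable)]
  -- midpoint identity
  have hmid : ∀ z : Ed d, f (x - z + h) = f (y - z) := by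
    intro z
    have hneg : intVec d (fun i => -(n i)) = -intVec d n := by
      ext i
      show ((-(n i) : ℤ) : ℝ) = -(((n i) : ℤ) : ℝ)
      push_cast; ring
    have hvec : x - z + h = (y - z) + intVec d (fun i => -(n i)) := by
      rw [hneg, hh]; abel
    rw [hvec, hfp (y - z) _]
  have hδofReal : ∀ w : Ed d, ‖w‖ < δ → ENNReal.ofReal ‖w‖ ≤ ENNReal.ofReal δ :=
    fun w hw => ENNReal.ofReal_le_ofReal hw.le
  have hinner_meas : ∀ c : Ed d, Measurable fun z : Ed d =>
      ∫⁻ t in Set.Ioc (0:ℝ) 1, ENNReal.ofReal ‖gradient f (c - t • z)‖ := by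
    intro c
    apply Measurable.lintegral_prod_right
      (f := fun (z : Ed d) (t : ℝ) => ENNReal.ofReal ‖gradient f (c - t • z)‖)
    exact (measurable_G hf).comp
      (continuous_const.sub (continuous_snd.smul continuous_fst)).measurable
  -- Term 1
  have hT1 : (∫⁻ z in B, ENNReal.ofReal (a1 z)) ≤ ENNReal.ofReal δ * Aint d f δ x := by
    have hpt1 : ∀ z ∈ B, ENNReal.ofReal (a1 z)
        ≤ ENNReal.ofReal δ * ∫⁻ t in Set.Ioc (0:ℝ) 1, ENNReal.ofReal ‖gradient f (x - t • z)‖ := by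
      intro z hz
      have hz' : ‖z‖ < δ := by simpa [hB] using hz
      have hxz : x + (-z) = x - z := (sub_eq_add_neg x z).symm
      have h0 : a1 z = |f (x + (-z)) - f x| := by
        show |f x - f (x - z)| = _
        rw [hxz, abs_sub_comm]
      rw [h0]
      refine (ofReal_abs_sub_le hf x (-z)).trans ?_
      have hrw : ∀ t : ℝ, x + t • (-z) = x - t • z := by intro t; rw [smul_neg]; abel
      simp_rw [hrw, norm_neg]
      exact mul_le_mul_left (hδofReal z hz') _
    calc (∫⁻ z in B, ENNReal.ofReal (a1 z))
        ≤ ∫⁻ z in B, ENNReal.ofReal δ *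
            ∫⁻ t in Set.Ioc (0:ℝ) 1, ENNReal.ofReal ‖gradient f (x - t • z)‖ :=
          setLIntegral_mono (((hinner_meas x).const_mul _)) hpt1
      _ = ENNReal.ofReal δ * ∫⁻ z in B, ∫⁻ t in Set.Ioc (0:ℝ) 1,
            ENNReal.ofReal ‖gradient f (x - t • z)‖ :=
          lintegral_const_mul _ (hinner_meas x)
      _ = ENNReal.ofReal δ * Aint d f δ x := by rw [Aint_eq_iterated hf]
  -- Term 3
  have hT3 : (∫⁻ z in B, ENNReal.ofReal (a3 z)) ≤ ENNReal.ofReal δ * Aint d f δ y := by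
    have hpt3 : ∀ z ∈ B, ENNReal.ofReal (a3 z)
        ≤ ENNReal.ofReal δ * ∫⁻ t in Set.Ioc (0:ℝ) 1, ENNReal.ofReal ‖gradient f (y - t • z)‖ := by
      intro z hz
      have hz' : ‖z‖ < δ := by simpa [hB] using hz
      have hyz : y + (-z) = y - z := (sub_eq_add_neg y z).symm
      have h0 : a3 z = |f (y + (-z)) - f y| := by
        show |f (x - z + h) - f y| = _
        rw [hmid z, hyz]
      rw [h0]
      refine (ofReal_abs_sub_le hf y (-z)).trans ?_
      have hrw : ∀ t : ℝ, y + t • (-z) = y - t • z := by intro t; rw [smul_neg]; abel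
      simp_rw [hrw, norm_neg]
      exact mul_le_mul_left (hδofReal z hz') _
    calc (∫⁻ z in B, ENNReal.ofReal (a3 z))
        ≤ ∫⁻ z in B, ENNReal.ofReal δ *
            ∫⁻ t in Set.Ioc (0:ℝ) 1, ENNReal.ofReal ‖gradient f (y - t • z)‖ :=
          setLIntegral_mono (((hinner_meas y).const_mul _)) hpt3
      _ = ENNReal.ofReal δ * ∫⁻ z in B, ∫⁻ t in Set.Ioc (0:ℝ) 1,
            ENNReal.ofReal ‖gradient f (y - t • z)‖ :=
          lintegral_const_mul _ (hinner_meas y)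
      _ = ENNReal.ofReal δ * Aint d f δ y := by rw [Aint_eq_iterated hf]
  -- Term 2
  have hT2 : (∫⁻ z in B, ENNReal.ofReal (a2 z)) ≤ ENNReal.ofReal δ * Mint d f δ x := by
    have hmeas2 : Measurable fun z : Ed d =>
        ∫⁻ t in Set.Ioc (0:ℝ) 1, ENNReal.ofReal ‖gradient f (x - z + t • h)‖ := by
      apply Measurable.lintegral_prod_right
        (f := fun (z : Ed d) (t : ℝ) => ENNReal.ofReal ‖gradient f (x - z + t • h)‖)
      exact (measurable_G hf).comp
        ((continuous_const.sub continuous_fst).add (continuous_snd.smul continuous_const)).measurable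
    have hpt2 : ∀ z ∈ B, ENNReal.ofReal (a2 z)
        ≤ ENNReal.ofReal δ *
          ∫⁻ t in Set.Ioc (0:ℝ) 1, ENNReal.ofReal ‖gradient f (x - z + t • h)‖ := by
      intro z _
      have h0 : a2 z = |f ((x - z) + h) - f (x - z)| := by rw [ha2, abs_sub_comm]
      rw [h0]
      refine (ofReal_abs_sub_le hf (x - z) h).trans ?_
      exact mul_le_mul_left (hδofReal h hnorm) _
    have hswap : (∫⁻ z in B, ∫⁻ t in Set.Ioc (0:ℝ) 1,
          ENNReal.ofReal ‖gradient f (x - z + t • h)‖)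
        = ∫⁻ t in Set.Ioc (0:ℝ) 1, ∫⁻ z in B,
            ENNReal.ofReal ‖gradient f (x - z + t • h)‖ := by
      apply lintegral_lintegral_swap
      exact ((measurable_G hf).comp
        ((continuous_const.sub continuous_fst).add
          (continuous_snd.smul continuous_const)).measurable).aemeasurable
    have hinner2 : ∀ t ∈ Set.Ioc (0:ℝ) 1,
        (∫⁻ z in B, ENNReal.ofReal ‖gradient f (x - z + t • h)‖) ≤ Mint d f δ x := by
      intro t ht
      have hrw : (fun z : Ed d => ENNReal.ofReal ‖gradient f (x - z + t • h)‖)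
          = fun z : Ed d => ENNReal.ofReal ‖gradient f ((x + t • h) - z)‖ := by
        funext z; congr 2; abel
      have hsub : Metric.ball (x + t • h) δ ⊆ Metric.ball x (2*δ) := by
        apply Metric.ball_subset_ball'
        have hd : dist (x + t • h) x = ‖t • h‖ := by
          rw [dist_eq_norm]; congr 1; abel
        rw [hd, norm_smul, Real.norm_eq_abs, abs_of_pos ht.1]
        nlinarith [ht.2, hnorm, norm_nonneg h, hδ]
      rw [hrw, hB]
      calc (∫⁻ z in Metric.ball (0:Ed d) δ, ENNReal.ofReal ‖gradient f ((x + t • h) - z)‖)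
          = ∫⁻ u in Metric.ball (x + t • h) δ, ENNReal.ofReal ‖gradient f u‖ :=
            reflect_lintegral (fun u => ENNReal.ofReal ‖gradient f u‖) (x + t • h) δ
        _ ≤ ∫⁻ u in Metric.ball x (2*δ), ENNReal.ofReal ‖gradient f u‖ :=
            lintegral_mono_set hsub
        _ = Mint d f δ x := by
            rw [Mint]
            exact (reflect_lintegral (fun u => ENNReal.ofReal ‖gradient f u‖) x (2*δ)).symm
    calc (∫⁻ z in B, ENNReal.ofReal (a2 z))
        ≤ ∫⁻ z in B, ENNReal.ofReal δ *
            ∫⁻ t in Set.Ioc (0:ℝ) 1, ENNReal.ofReal ‖gradient f (x - z + t • h)‖ :=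
          setLIntegral_mono (hmeas2.const_mul _) hpt2
      _ = ENNReal.ofReal δ * ∫⁻ z in B, ∫⁻ t in Set.Ioc (0:ℝ) 1,
            ENNReal.ofReal ‖gradient f (x - z + t • h)‖ :=
          lintegral_const_mul _ hmeas2
      _ = ENNReal.ofReal δ * ∫⁻ t in Set.Ioc (0:ℝ) 1, ∫⁻ z in B,
            ENNReal.ofReal ‖gradient f (x - z + t • h)‖ := by rw [hswap]
      _ ≤ ENNReal.ofReal δ * ∫⁻ _t in Set.Ioc (0:ℝ) 1, Mint d f δ x := by
          exact mul_le_mul_right (setLIntegral_mono measurable_const hinner2) _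
      _ = ENNReal.ofReal δ * Mint d f δ x := by
          rw [setLIntegral_const, Real.volume_Ioc]
          simp
  -- combine
  calc ENNReal.ofReal |f x - f y|
      ≤ κ⁻¹ * ∫⁻ z in B, ENNReal.ofReal (a1 z + a2 z + a3 z) := e1
    _ = κ⁻¹ * ((∫⁻ z in B, ENNReal.ofReal (a1 z)) + (∫⁻ z in B, ENNReal.ofReal (a2 z))
          + (∫⁻ z in B, ENNReal.ofReal (a3 z))) := by rw [hsplit]
    _ ≤ κ⁻¹ * (ENNReal.ofReal δ * Aint d f δ x + ENNReal.ofReal δ * Mint d f δ x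
          + ENNReal.ofReal δ * Aint d f δ y) := by
        exact mul_le_mul_right (add_le_add (add_le_add hT1 hT2) hT3) _
    _ = κ⁻¹ * (ENNReal.ofReal δ * (Aint d f δ x + Mint d f δ x + Aint d f δ y)) := by
        ring

end Aux6
section Aux7
variable {d : ℕ}

lemma G_periodic {f : Ed d → ℝ} (hf : ContDiff ℝ (⊤ : ℕ∞) f) (hfp : IsPeriodic f) :
    ∀ (x : Ed d) (n : Fin d → ℤ),
      ENNReal.ofReal ‖gradient f (x + intVec d n)‖ = ENNReal.ofReal ‖gradient f x‖ := by
  intro x n; rw [norm_gradient_periodic hf hfp]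

lemma lintegral_box_sub {f : Ed d → ℝ} (hf : ContDiff ℝ (⊤ : ℕ∞) f) (hfp : IsPeriodic f) (c : Ed d) :
    (∫⁻ x in unitBox d, ENNReal.ofReal ‖gradient f (x - c)‖)
      = ∫⁻ x in unitBox d, ENNReal.ofReal ‖gradient f x‖ := by
  simp_rw [sub_eq_add_neg]
  exact lintegral_unitBox_translate _ (measurable_G hf) (G_periodic hf hfp) (-c)

lemma lintegral_box_Aint {f : Ed d → ℝ} (hf : ContDiff ℝ (⊤ : ℕ∞) f) (hfp : IsPeriodic f) (δ : ℝ) :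
    (∫⁻ x in unitBox d, Aint d f δ x)
      = (∫⁻ x in unitBox d, ENNReal.ofReal ‖gradient f x‖) * volume (Metric.ball (0:Ed d) δ) := by
  have hswap : (∫⁻ x in unitBox d, Aint d f δ x)
      = ∫⁻ p, (∫⁻ x in unitBox d, ENNReal.ofReal ‖gradient f (x - p.2 • p.1)‖)
          ∂((volume.restrict (Metric.ball (0:Ed d) δ)).prod (volume.restrict (Set.Ioc (0:ℝ) 1))) := by
    apply lintegral_lintegral_swap
    exact ((measurable_G hf).comp
      (continuous_fst.sub (continuous_snd.snd.smul continuous_snd.fst)).measurable).aemeasurable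
  rw [hswap]
  have hpt : ∀ p : Ed d × ℝ, (∫⁻ x in unitBox d, ENNReal.ofReal ‖gradient f (x - p.2 • p.1)‖)
      = ∫⁻ x in unitBox d, ENNReal.ofReal ‖gradient f x‖ := fun p => lintegral_box_sub hf hfp _
  simp_rw [hpt]
  rw [lintegral_const]
  congr 1
  rw [← Set.univ_prod_univ, Measure.prod_prod, Measure.restrict_apply_univ,
    Measure.restrict_apply_univ, Real.volume_Ioc]
  simp

lemma lintegral_box_Mint {f : Ed d → ℝ} (hf : ContDiff ℝ (⊤ : ℕ∞) f) (hfp : IsPeriodic f) (δ : ℝ) :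
    (∫⁻ x in unitBox d, Mint d f δ x)
      = (∫⁻ x in unitBox d, ENNReal.ofReal ‖gradient f x‖)
          * volume (Metric.ball (0:Ed d) (2*δ)) := by
  have hswap : (∫⁻ x in unitBox d, Mint d f δ x)
      = ∫⁻ w in Metric.ball (0:Ed d) (2*δ),
          (∫⁻ x in unitBox d, ENNReal.ofReal ‖gradient f (x - w)‖) := by
    apply lintegral_lintegral_swap
    exact ((measurable_G hf).comp (continuous_fst.sub continuous_snd).measurable).aemeasurable
  rw [hswap]
  have hpt : ∀ w : Ed d, (∫⁻ x in unitBox d, ENNReal.ofReal ‖gradient f (x - w)‖)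
      = ∫⁻ x in unitBox d, ENNReal.ofReal ‖gradient f x‖ := fun w => lintegral_box_sub hf hfp _
  simp_rw [hpt]
  rw [lintegral_const]
  congr 1
  rw [Measure.restrict_apply_univ]

lemma vol_ball_two {δ : ℝ} (hδ : 0 < δ) :
    volume (Metric.ball (0:Ed d) (2*δ)) = 2^d * volume (Metric.ball (0:Ed d) δ) := by
  rcases Nat.eq_zero_or_pos d with hd | hd
  · subst hd
    haveI : Unique (Ed 0) := ⟨⟨0⟩, fun a => PiLp.ext fun i => i.elim0⟩
    have h1 : Metric.ball (0:Ed 0) (2*δ) = Set.univ :=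
      Set.eq_univ_of_forall fun y => by
        simp [Metric.mem_ball, Subsingleton.elim y 0]; positivity
    have h2 : Metric.ball (0:Ed 0) δ = Set.univ :=
      Set.eq_univ_of_forall fun y => by
        simp [Metric.mem_ball, Subsingleton.elim y 0]; positivity
    rw [h1, h2]; simp
  · haveI : Nontrivial (Ed d) := by
      refine ⟨⟨EuclideanSpace.single ⟨0, hd⟩ 1, 0, fun hc => ?_⟩⟩
      have h := congrArg (fun v : Ed d => v ⟨0, hd⟩) hc
      simp [EuclideanSpace.single_apply] at h
    have hfr : Module.finrank ℝ (Ed d) = d := finrank_euclideanSpace_fin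
    rw [Measure.addHaar_ball volume (0:Ed d) (by positivity : (0:ℝ) ≤ 2*δ),
      Measure.addHaar_ball volume (0:Ed d) hδ.le, hfr]
    rw [mul_pow, ENNReal.ofReal_mul (by positivity)]
    rw [mul_assoc]
    congr 1
    rw [ENNReal.ofReal_pow (by norm_num)]
    norm_num

lemma marginal_fst_le {ρ₀ : Ed d → ℝ} (hρ₀ : Measurable ρ₀) (hb : ∀ x, ENNReal.ofReal (ρ₀ x) ≤ 2)
    {γ : Measure (Ed d × Ed d)}
    (heq : γ.map Prod.fst
      = (volume.restrict (unitBox d)).withDensity (fun x => ENNReal.ofReal (ρ₀ x)))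
    {F : Ed d → ℝ≥0∞} (hF : Measurable F) :
    (∫⁻ q, F q.1 ∂γ) ≤ 2 * ∫⁻ x in unitBox d, F x := by
  have h1 : (∫⁻ q, F q.1 ∂γ) = ∫⁻ x, F x ∂(γ.map Prod.fst) :=
    (lintegral_map hF measurable_fst).symm
  rw [h1, heq,
    lintegral_withDensity_eq_lintegral_mul _ hρ₀.ennreal_ofReal hF]
  calc (∫⁻ x in unitBox d, ENNReal.ofReal (ρ₀ x) * F x)
      ≤ ∫⁻ x in unitBox d, 2 * F x :=
        lintegral_mono fun x => mul_le_mul_left (hb x) _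
    _ = 2 * ∫⁻ x in unitBox d, F x := lintegral_const_mul _ hF

lemma marginal_snd_le {ρ₁ : Ed d → ℝ} (hρ₁ : Measurable ρ₁) (hb : ∀ x, ENNReal.ofReal (ρ₁ x) ≤ 2)
    {γ : Measure (Ed d × Ed d)}
    (heq : γ.map Prod.snd
      = (volume.restrict (unitBox d)).withDensity (fun x => ENNReal.ofReal (ρ₁ x)))
    {F : Ed d → ℝ≥0∞} (hF : Measurable F) :
    (∫⁻ q, F q.2 ∂γ) ≤ 2 * ∫⁻ x in unitBox d, F x := by
  have h1 : (∫⁻ q, F q.2 ∂γ) = ∫⁻ x, F x ∂(γ.map Prod.snd) :=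
    (lintegral_map hF measurable_snd).symm
  rw [h1, heq,
    lintegral_withDensity_eq_lintegral_mul _ hρ₁.ennreal_ofReal hF]
  calc (∫⁻ x in unitBox d, ENNReal.ofReal (ρ₁ x) * F x)
      ≤ ∫⁻ x in unitBox d, 2 * F x :=
        lintegral_mono fun x => mul_le_mul_left (hb x) _
    _ = 2 * ∫⁻ x in unitBox d, F x := lintegral_const_mul _ hF

lemma rhoPlus_le {ρ : Ed d → ℝ} (hρ1 : ∀ x, ρ x = 1 ∨ ρ x = -1) (x : Ed d) :
    ENNReal.ofReal (rhoPlus ρ x) ≤ 2 := by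
  have : rhoPlus ρ x ≤ 2 := by
    rw [rhoPlus]
    rcases hρ1 x with h | h <;> rw [h] <;> norm_num
  calc ENNReal.ofReal (rhoPlus ρ x) ≤ ENNReal.ofReal 2 := ENNReal.ofReal_le_ofReal this
    _ = 2 := by norm_num

lemma rhoMinus_le {ρ : Ed d → ℝ} (hρ1 : ∀ x, ρ x = 1 ∨ ρ x = -1) (x : Ed d) :
    ENNReal.ofReal (rhoMinus ρ x) ≤ 2 := by
  have : rhoMinus ρ x ≤ 2 := by
    rw [rhoMinus]
    rcases hρ1 x with h | h <;> rw [h] <;> norm_num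
  calc ENNReal.ofReal (rhoMinus ρ x) ≤ ENNReal.ofReal 2 := ENNReal.ofReal_le_ofReal this
    _ = 2 := by norm_num

lemma measurable_rhoPlus {ρ : Ed d → ℝ} (hρ : Measurable ρ) : Measurable (rhoPlus ρ) := by
  unfold rhoPlus
  exact (hρ.max measurable_const).const_mul 2

lemma measurable_rhoMinus {ρ : Ed d → ℝ} (hρ : Measurable ρ) : Measurable (rhoMinus ρ) := by
  unfold rhoMinus
  exact ((hρ.min measurable_const).const_mul 2).neg

end Aux7
section Aux8
variable {d : ℕ}

lemma scale_bound {ρ : Ed d → ℝ} (hρm : Measurable ρ) (hρ1 : ∀ x, ρ x = 1 ∨ ρ x = -1)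
    {f : Ed d → ℝ} (hf : ContDiff ℝ (⊤ : ℕ∞) f) (hfp : IsPeriodic f)
    {γ : Measure (Ed d × Ed d)} (hγ : IsCoupling (rhoPlus ρ) (rhoMinus ρ) γ)
    {δ : ℝ} (hδ : 0 < δ) :
    (∫⁻ q in {q : Ed d × Ed d | perDist q.1 q.2 < δ}, ENNReal.ofReal |f q.1 - f q.2| ∂γ)
      ≤ ENNReal.ofReal δ * ((4 + 2^(d+1) : ℝ≥0∞)
          * ∫⁻ x in unitBox d, ENNReal.ofReal ‖gradient f x‖) := by
  obtain ⟨hprob, hfst, hsnd⟩ := hγ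
  set Ibox := ∫⁻ x in unitBox d, ENNReal.ofReal ‖gradient f x‖ with hIb
  set κ := volume (Metric.ball (0:Ed d) δ) with hκ
  have hκ0 : κ ≠ 0 := (Metric.measure_ball_pos volume 0 hδ).ne'
  have hκtop : κ ≠ ⊤ := measure_ball_lt_top.ne
  have hA := measurable_Aint hf δ
  have hM := measurable_Mint hf δ
  set X : Ed d × Ed d → ℝ≥0∞ :=
    fun q => Aint d f δ q.1 + Mint d f δ q.1 + Aint d f δ q.2 with hX
  have hXmeas : Measurable X :=
    (((hA.comp measurable_fst).add (hM.comp measurable_fst)).add (hA.comp measurable_snd))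
  have step1 : (∫⁻ q in {q : Ed d × Ed d | perDist q.1 q.2 < δ},
        ENNReal.ofReal |f q.1 - f q.2| ∂γ)
      ≤ ∫⁻ q in {q : Ed d × Ed d | perDist q.1 q.2 < δ},
          κ⁻¹ * (ENNReal.ofReal δ * X q) ∂γ := by
    apply setLIntegral_mono ((hXmeas.const_mul _).const_mul _)
    intro q hq
    exact pointwise_key hf hfp hδ hq
  have step2 : (∫⁻ q in {q : Ed d × Ed d | perDist q.1 q.2 < δ},
        κ⁻¹ * (ENNReal.ofReal δ * X q) ∂γ)
      ≤ (κ⁻¹ * ENNReal.ofReal δ) * ∫⁻ q, X q ∂γ := by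
    calc (∫⁻ q in {q : Ed d × Ed d | perDist q.1 q.2 < δ},
          κ⁻¹ * (ENNReal.ofReal δ * X q) ∂γ)
        ≤ ∫⁻ q, κ⁻¹ * (ENNReal.ofReal δ * X q) ∂γ :=
          lintegral_mono' Measure.restrict_le_self le_rfl
      _ = (κ⁻¹ * ENNReal.ofReal δ) * ∫⁻ q, X q ∂γ := by
          simp_rw [← mul_assoc]
          exact lintegral_const_mul _ hXmeas
  have hsum : (∫⁻ q, X q ∂γ)
      = (∫⁻ q, Aint d f δ q.1 ∂γ) + (∫⁻ q, Mint d f δ q.1 ∂γ)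
        + (∫⁻ q, Aint d f δ q.2 ∂γ) := by
    rw [hX]
    rw [lintegral_add_left
      (f := fun q : Ed d × Ed d => Aint d f δ q.1 + Mint d f δ q.1)
      ((hA.comp measurable_fst).add (hM.comp measurable_fst)),
      lintegral_add_left (f := fun q : Ed d × Ed d => Aint d f δ q.1) (hA.comp measurable_fst)]
  have hA1 : (∫⁻ q, Aint d f δ q.1 ∂γ) ≤ 2 * (Ibox * κ) := by
    have := marginal_fst_le (measurable_rhoPlus hρm) (rhoPlus_le hρ1) hfst hA
    rwa [lintegral_box_Aint hf hfp δ] at this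
  have hM1 : (∫⁻ q, Mint d f δ q.1 ∂γ) ≤ 2 * (Ibox * (2^d * κ)) := by
    have := marginal_fst_le (measurable_rhoPlus hρm) (rhoPlus_le hρ1) hfst hM
    rwa [lintegral_box_Mint hf hfp δ, vol_ball_two hδ] at this
  have hA2 : (∫⁻ q, Aint d f δ q.2 ∂γ) ≤ 2 * (Ibox * κ) := by
    have := marginal_snd_le (measurable_rhoMinus hρm) (rhoMinus_le hρ1) hsnd hA
    rwa [lintegral_box_Aint hf hfp δ] at this
  have htotal : (∫⁻ q, X q ∂γ) ≤ κ * ((4 + 2^(d+1) : ℝ≥0∞) * Ibox) := by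
    rw [hsum]
    calc (∫⁻ q, Aint d f δ q.1 ∂γ) + (∫⁻ q, Mint d f δ q.1 ∂γ) + (∫⁻ q, Aint d f δ q.2 ∂γ)
        ≤ 2 * (Ibox * κ) + 2 * (Ibox * (2^d * κ)) + 2 * (Ibox * κ) :=
          add_le_add (add_le_add hA1 hM1) hA2
      _ = κ * ((4 + 2^(d+1) : ℝ≥0∞) * Ibox) := by ring
  calc (∫⁻ q in {q : Ed d × Ed d | perDist q.1 q.2 < δ},
        ENNReal.ofReal |f q.1 - f q.2| ∂γ)
      ≤ (κ⁻¹ * ENNReal.ofReal δ) * ∫⁻ q, X q ∂γ := step1.trans step2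
    _ ≤ (κ⁻¹ * ENNReal.ofReal δ) * (κ * ((4 + 2^(d+1) : ℝ≥0∞) * Ibox)) :=
        mul_le_mul_right htotal _
    _ = (κ⁻¹ * κ) * (ENNReal.ofReal δ * ((4 + 2^(d+1) : ℝ≥0∞) * Ibox)) := by ring
    _ = ENNReal.ofReal δ * ((4 + 2^(d+1) : ℝ≥0∞) * Ibox) := by
        rw [ENNReal.inv_mul_cancel hκ0 hκtop, one_mul]

end Aux8
section Aux9
variable {d : ℕ}

lemma unitBox_subset_closedBall : unitBox d ⊆ Metric.closedBall (0:Ed d) d := by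
  intro y hy
  simp only [Metric.mem_closedBall, dist_zero_right]
  have h1 : ‖y‖ ≤ Real.sqrt d := by
    rw [EuclideanSpace.norm_eq]
    apply Real.sqrt_le_sqrt
    calc (∑ i, ‖y i‖^2) ≤ ∑ _i : Fin d, 1 := by
          apply Finset.sum_le_sum
          intro i _
          have hyi := hy i
          have h0 : |y i| ≤ 1 := by
            rw [abs_le]; constructor <;> [linarith [hyi.1]; linarith [hyi.2]]
          calc ‖y i‖^2 = |y i|^2 := rfl
            _ ≤ 1^2 := by apply pow_le_pow_left₀ (abs_nonneg _) h0
            _ = 1 := one_pow 2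
      _ = d := by simp
  refine h1.trans ?_
  calc Real.sqrt d ≤ Real.sqrt (d^2) := by
        apply Real.sqrt_le_sqrt
        rcases Nat.eq_zero_or_pos d with h | h
        · simp [h]
        · have : (1:ℝ) ≤ d := by exact_mod_cast h
          nlinarith
    _ = d := by rw [Real.sqrt_sq (Nat.cast_nonneg d)]

lemma volume_unitBox_ne_top : volume (unitBox d) ≠ ⊤ :=
  ((measure_mono unitBox_subset_closedBall).trans_lt measure_closedBall_lt_top).ne

lemma sqrt_two_le_two : Real.sqrt 2 ≤ 2 := by
  nlinarith [Real.sq_sqrt (by norm_num : (0:ℝ) ≤ 2), Real.sqrt_nonneg 2]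

lemma geom_fact : (1 - ENNReal.ofReal (Real.sqrt 2 / 2))⁻¹ ≤ 4 := by
  have h1 : Real.sqrt 2 / 2 ≤ 3/4 := by
    have h2 : Real.sqrt 2 ≤ 3/2 := by
      nlinarith [Real.sq_sqrt (by norm_num : (0:ℝ) ≤ 2), Real.sqrt_nonneg 2]
    linarith
  have h3 : ENNReal.ofReal (Real.sqrt 2 / 2) ≤ ENNReal.ofReal (3/4) :=
    ENNReal.ofReal_le_ofReal h1
  have h4 : ENNReal.ofReal (1/4 : ℝ) ≤ 1 - ENNReal.ofReal (Real.sqrt 2 / 2) := by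
    calc ENNReal.ofReal (1/4 : ℝ) = ENNReal.ofReal 1 - ENNReal.ofReal (3/4) := by
          rw [← ENNReal.ofReal_sub _ (by norm_num : (0:ℝ) ≤ 3/4)]
          norm_num
      _ ≤ 1 - ENNReal.ofReal (Real.sqrt 2 / 2) := by
          rw [ENNReal.ofReal_one]
          exact tsub_le_tsub_left h3 1
  calc (1 - ENNReal.ofReal (Real.sqrt 2 / 2))⁻¹ ≤ (ENNReal.ofReal (1/4 : ℝ))⁻¹ :=
        ENNReal.inv_le_inv' h4
    _ = 4 := by
        rw [← ENNReal.ofReal_inv_of_pos (by norm_num : (0:ℝ) < 1/4)]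
        rw [show ((1/4:ℝ))⁻¹ = 4 by norm_num]
        norm_num

end Aux9
lemma sqrt_pow_eq {x : ℝ} (h : 0 ≤ x) (n : ℕ) : Real.sqrt (x^n) = (Real.sqrt x)^n := by
  induction n with
  | zero => simp
  | succ k ih => rw [pow_succ, pow_succ, Real.sqrt_mul (by positivity), ih]

/-- the near-diagonal weighted difference quotient of a smooth function,
integrated against a coupling of `ρ₊` and `ρ₋`, is controlled by `√r ∫ |∇f|`. -/
theorem coupling_sqrt_bound (d : ℕ) :
    ∃ C : ℝ, 0 < C ∧
      ∀ ρ : Ed d → ℝ, Measurable ρ → IsPeriodic ρ →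
        (∀ x, ρ x = 1 ∨ ρ x = -1) → (∫ x in unitBox d, ρ x) = 0 →
      ∀ f : Ed d → ℝ, ContDiff ℝ (⊤ : ℕ∞) f → IsPeriodic f →
      ∀ γ : Measure (Ed d × Ed d), IsCoupling (rhoPlus ρ) (rhoMinus ρ) γ →
      ∀ r : ℝ, 0 < r → r ≤ 1 →
        (∫ q in {q : Ed d × Ed d | perDist q.1 q.2 < r},
            |f q.1 - f q.2| / Real.sqrt (perDist q.1 q.2) ∂γ) ≤
          C * Real.sqrt r * ∫ x in unitBox d, ‖gradient f x‖ := by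
  classical
  set CR : ℝ := 4 + 2^(d+1) with hCR
  have hCRpos : (0:ℝ) < CR := by positivity
  refine ⟨8 * CR, by positivity, ?_⟩
  intro ρ hρm _hρp hρ1 _hρint f hf hfp γ hγ r hr _hr1
  have hgc : Continuous fun x : Ed d => ‖gradient f x‖ := continuous_norm_gradient hf
  set Ibox : ℝ≥0∞ := ∫⁻ x in unitBox d, ENNReal.ofReal ‖gradient f x‖ with hIb
  obtain ⟨K, _hK0, hK⟩ := periodic_bounded hgc (norm_gradient_periodic hf hfp)
  have hIfin : Ibox ≠ ⊤ := by
    have h1 : Ibox ≤ ENNReal.ofReal K * volume (unitBox d) := by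
      rw [hIb]
      calc (∫⁻ x in unitBox d, ENNReal.ofReal ‖gradient f x‖)
          ≤ ∫⁻ _x in unitBox d, ENNReal.ofReal K :=
            lintegral_mono fun x => ENNReal.ofReal_le_ofReal (hK x)
        _ = ENNReal.ofReal K * volume (unitBox d) := by
            rw [setLIntegral_const]
    exact (h1.trans_lt (ENNReal.mul_lt_top ENNReal.ofReal_lt_top
      (lt_top_iff_ne_top.mpr volume_unitBox_ne_top))).ne
  have hSk : ∀ s : ℝ, MeasurableSet {q : Ed d × Ed d | perDist q.1 q.2 < s} :=
    fun s => (isOpen_lt continuous_perDist continuous_const).measurableSet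
  have hΔmeas : Measurable fun q : Ed d × Ed d => |f q.1 - f q.2| :=
    (((hf.continuous.comp continuous_fst).sub (hf.continuous.comp continuous_snd)).abs).measurable
  have hφmeas : Measurable fun q : Ed d × Ed d => |f q.1 - f q.2| / Real.sqrt (perDist q.1 q.2) :=
    hΔmeas.div (Real.continuous_sqrt.comp continuous_perDist).measurable
  have hnn : 0 ≤ᵐ[γ.restrict {q : Ed d × Ed d | perDist q.1 q.2 < r}]
      fun q : Ed d × Ed d => |f q.1 - f q.2| / Real.sqrt (perDist q.1 q.2) :=
    Filter.Eventually.of_forall fun q => div_nonneg (abs_nonneg _) (Real.sqrt_nonneg _)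
  rw [integral_eq_lintegral_of_nonneg_ae hnn hφmeas.aestronglyMeasurable]
  have hRHS : (∫ x in unitBox d, ‖gradient f x‖) = Ibox.toReal := by
    rw [integral_eq_lintegral_of_nonneg_ae
      (Filter.Eventually.of_forall fun x => norm_nonneg _) hgc.aestronglyMeasurable.restrict]
  rw [hRHS]
  set L : ℝ≥0∞ := ∫⁻ q in {q : Ed d × Ed d | perDist q.1 q.2 < r},
    ENNReal.ofReal (|f q.1 - f q.2| / Real.sqrt (perDist q.1 q.2)) ∂γ with hLdef
  suffices hmain : L ≤ ENNReal.ofReal (8 * CR * Real.sqrt r) * Ibox by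
    have hfin : ENNReal.ofReal (8 * CR * Real.sqrt r) * Ibox ≠ ⊤ :=
      ENNReal.mul_ne_top ENNReal.ofReal_ne_top hIfin
    have h2 := ENNReal.toReal_mono hfin hmain
    rwa [ENNReal.toReal_mul, ENNReal.toReal_ofReal (by positivity)] at h2
  -- series setup
  set c : ℝ≥0∞ := ENNReal.ofReal (Real.sqrt 2 / 2) with hc
  set Q : ℝ≥0∞ := ENNReal.ofReal CR * Ibox with hQ
  have hCRe : (4 + 2^(d+1) : ℝ≥0∞) = ENNReal.ofReal CR := by
    rw [hCR, ENNReal.ofReal_add (by norm_num) (by positivity),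
      ENNReal.ofReal_pow (by norm_num)]
    norm_num
  set a : ℕ → ℝ≥0∞ := fun k => ENNReal.ofReal ((Real.sqrt 2)^(k+1) / Real.sqrt r) with ha
  set ψ : ℕ → Ed d × Ed d → ℝ≥0∞ := fun k =>
    Set.indicator {q : Ed d × Ed d | perDist q.1 q.2 < r * (1/2)^k}
      (fun q => a k * ENNReal.ofReal |f q.1 - f q.2|) with hψ
  have hψmeas : ∀ k, Measurable (ψ k) := fun k =>
    ((hΔmeas.ennreal_ofReal).const_mul (a k)).indicator (hSk _)
  -- pointwise domination
  have hpt : ∀ q : Ed d × Ed d,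
      Set.indicator {q : Ed d × Ed d | perDist q.1 q.2 < r}
        (fun q => ENNReal.ofReal (|f q.1 - f q.2| / Real.sqrt (perDist q.1 q.2))) q
      ≤ ∑' k, ψ k q := by
    intro q
    by_cases hqS : q ∈ {q : Ed d × Ed d | perDist q.1 q.2 < r}
    · rw [Set.indicator_of_mem hqS]
      rcases eq_or_lt_of_le (perDist_nonneg q.1 q.2) with hpd0 | hpd
      · have hfeq : f q.1 = f q.2 := eq_of_perDist_eq_zero hf hfp hpd0.symm
        rw [hfeq]
        simp
      · have hex : ∃ m : ℕ, r * (1/2)^m ≤ perDist q.1 q.2 := by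
          obtain ⟨m, hm⟩ := exists_pow_lt_of_lt_one
            (div_pos hpd hr) (by norm_num : (1/2:ℝ) < 1)
          refine ⟨m, ?_⟩
          rw [mul_comm]
          exact le_of_lt ((lt_div_iff₀ hr).mp hm)
        set k0 := Nat.find hex with hk0def
        have hspec : r * (1/2)^k0 ≤ perDist q.1 q.2 := Nat.find_spec hex
        have hk0pos : 0 < k0 := by
          rcases Nat.eq_zero_or_pos k0 with h0 | h0
          · exfalso
            rw [h0] at hspec
            simp only [pow_zero, mul_one] at hspec
            have hqr : perDist q.1 q.2 < r := hqS
            linarith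
          · exact h0
        set j := k0 - 1 with hjdef
        have hj1 : j + 1 = k0 := Nat.succ_pred_eq_of_pos hk0pos
        have hlt : perDist q.1 q.2 < r * (1/2)^j :=
          not_le.mp (Nat.find_min hex (show j < k0 by omega))
        have hge : r * (1/2)^(j+1) ≤ perDist q.1 q.2 := by rw [hj1]; exact hspec
        have hqj : q ∈ {q : Ed d × Ed d | perDist q.1 q.2 < r * (1/2)^j} := hlt
        have hterm : ENNReal.ofReal (|f q.1 - f q.2| / Real.sqrt (perDist q.1 q.2)) ≤ ψ j q := by
          rw [hψ]
          simp only
          rw [Set.indicator_of_mem hqj, ha]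
          simp only
          rw [← ENNReal.ofReal_mul (by positivity)]
          apply ENNReal.ofReal_le_ofReal
          have hsp : 0 < Real.sqrt (perDist q.1 q.2) := Real.sqrt_pos.mpr hpd
          have hsr : 0 < Real.sqrt r := Real.sqrt_pos.mpr hr
          have hkey : Real.sqrt r ≤ (Real.sqrt 2)^(j+1) * Real.sqrt (perDist q.1 q.2) := by
            have h2 : r ≤ 2^(j+1) * perDist q.1 q.2 := by
              have hp : (0:ℝ) < (2:ℝ)^(j+1) := by positivity
              have h3 : r * ((2:ℝ)^(j+1))⁻¹ ≤ perDist q.1 q.2 := by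
                rw [show ((2:ℝ)^(j+1))⁻¹ = (1/2:ℝ)^(j+1) by rw [← inv_pow]; norm_num]
                exact hge
              calc r = 2^(j+1) * (r * ((2:ℝ)^(j+1))⁻¹) := by field_simp
                _ ≤ 2^(j+1) * perDist q.1 q.2 := mul_le_mul_of_nonneg_left h3 hp.le
            calc Real.sqrt r ≤ Real.sqrt (2^(j+1) * perDist q.1 q.2) := Real.sqrt_le_sqrt h2
              _ = Real.sqrt (2^(j+1)) * Real.sqrt (perDist q.1 q.2) :=
                  Real.sqrt_mul (by positivity) _
              _ = (Real.sqrt 2)^(j+1) * Real.sqrt (perDist q.1 q.2) := by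
                  rw [sqrt_pow_eq (by norm_num : (0:ℝ) ≤ 2)]
          have hfrac : 1 / Real.sqrt (perDist q.1 q.2) ≤ (Real.sqrt 2)^(j+1) / Real.sqrt r := by
            rw [div_le_div_iff₀ hsp hsr, one_mul]
            exact hkey
          calc |f q.1 - f q.2| / Real.sqrt (perDist q.1 q.2)
              = |f q.1 - f q.2| * (1 / Real.sqrt (perDist q.1 q.2)) := by ring
            _ ≤ |f q.1 - f q.2| * ((Real.sqrt 2)^(j+1) / Real.sqrt r) :=
                mul_le_mul_of_nonneg_left hfrac (abs_nonneg _)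
            _ = (Real.sqrt 2)^(j+1) / Real.sqrt r * |f q.1 - f q.2| := by ring
        exact hterm.trans (ENNReal.le_tsum j)
    · rw [Set.indicator_of_notMem hqS]
      exact zero_le
  -- real-number identity for the geometric factor
  have hAk : ∀ k : ℕ, (Real.sqrt 2)^(k+1) / Real.sqrt r * (r * (1/2)^k)
      = (Real.sqrt 2 * Real.sqrt r) * (Real.sqrt 2 / 2)^k := by
    intro k
    set s := Real.sqrt r with hs
    have hsr : s ≠ 0 := (Real.sqrt_pos.mpr hr).ne'
    have hss : s * s = r := Real.mul_self_sqrt hr.le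
    have hmp : (Real.sqrt 2 / 2)^k = (Real.sqrt 2)^k * (1/2:ℝ)^k := by
      rw [← mul_pow]
      congr 1
      ring
    rw [← hss, hmp, pow_succ]
    field_simp
  -- assemble
  have hL1 : L = ∫⁻ q, Set.indicator {q : Ed d × Ed d | perDist q.1 q.2 < r}
      (fun q => ENNReal.ofReal (|f q.1 - f q.2| / Real.sqrt (perDist q.1 q.2))) q ∂γ := by
    rw [hLdef, lintegral_indicator (hSk r)]
  have hstep : L ≤ ∑' k, ∫⁻ q, ψ k q ∂γ := by
    rw [hL1]
    calc _ ≤ ∫⁻ q, ∑' k, ψ k q ∂γ := lintegral_mono hpt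
      _ = ∑' k, ∫⁻ q, ψ k q ∂γ := lintegral_tsum fun k => (hψmeas k).aemeasurable
  have hterm2 : ∀ k : ℕ, (∫⁻ q, ψ k q ∂γ)
      ≤ (ENNReal.ofReal (Real.sqrt 2 * Real.sqrt r) * Q) * c^k := by
    intro k
    have hδk : (0:ℝ) < r * (1/2)^k := by positivity
    have h1 : (∫⁻ q, ψ k q ∂γ) = a k *
        ∫⁻ q in {q : Ed d × Ed d | perDist q.1 q.2 < r * (1/2)^k},
          ENNReal.ofReal |f q.1 - f q.2| ∂γ := by
      rw [hψ]
      simp only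
      rw [lintegral_indicator (hSk _)]
      exact lintegral_const_mul _ hΔmeas.ennreal_ofReal
    rw [h1]
    have h2 := scale_bound hρm hρ1 hf hfp ⟨hγ.1, hγ.2.1, hγ.2.2⟩ hδk
    rw [hCRe] at h2
    calc a k * (∫⁻ q in {q : Ed d × Ed d | perDist q.1 q.2 < r * (1/2)^k},
          ENNReal.ofReal |f q.1 - f q.2| ∂γ)
        ≤ a k * (ENNReal.ofReal (r * (1/2)^k) * Q) := by
          apply mul_le_mul_right
          rw [hQ]
          exact h2
      _ = ENNReal.ofReal ((Real.sqrt 2)^(k+1) / Real.sqrt r * (r * (1/2)^k)) * Q := by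
          rw [ha]
          simp only
          rw [← mul_assoc, ← ENNReal.ofReal_mul (by positivity)]
      _ = ENNReal.ofReal ((Real.sqrt 2 * Real.sqrt r) * (Real.sqrt 2 / 2)^k) * Q := by
          rw [hAk k]
      _ = (ENNReal.ofReal (Real.sqrt 2 * Real.sqrt r) * Q) * c^k := by
          rw [ENNReal.ofReal_mul (by positivity), hc,
            ← ENNReal.ofReal_pow (by positivity)]
          ring
  calc L ≤ ∑' k, ∫⁻ q, ψ k q ∂γ := hstep
    _ ≤ ∑' k, (ENNReal.ofReal (Real.sqrt 2 * Real.sqrt r) * Q) * c^k :=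
        ENNReal.tsum_le_tsum hterm2
    _ = (ENNReal.ofReal (Real.sqrt 2 * Real.sqrt r) * Q) * ∑' k, c^k :=
        ENNReal.tsum_mul_left
    _ = (ENNReal.ofReal (Real.sqrt 2 * Real.sqrt r) * Q) * (1 - c)⁻¹ := by
        rw [ENNReal.tsum_geometric]
    _ ≤ (ENNReal.ofReal (Real.sqrt 2 * Real.sqrt r) * Q) * 4 := by
        rw [hc]
        exact mul_le_mul_right geom_fact _
    _ = ENNReal.ofReal (Real.sqrt 2 * Real.sqrt r) * ENNReal.ofReal 4
          * (ENNReal.ofReal CR * Ibox) := by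
        rw [hQ, show (4:ℝ≥0∞) = ENNReal.ofReal 4 by norm_num]
        ring
    _ = ENNReal.ofReal (Real.sqrt 2 * Real.sqrt r * 4 * CR) * Ibox := by
        rw [ENNReal.ofReal_mul (by positivity : (0:ℝ) ≤ Real.sqrt 2 * Real.sqrt r * 4),
          ENNReal.ofReal_mul (by positivity : (0:ℝ) ≤ Real.sqrt 2 * Real.sqrt r)]
        ring
    _ ≤ ENNReal.ofReal (8 * CR * Real.sqrt r) * Ibox := by
        apply mul_le_mul_left
        apply ENNReal.ofReal_le_ofReal
        nlinarith [mul_nonneg (mul_nonneg (sub_nonneg.mpr sqrt_two_le_two)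
          (Real.sqrt_nonneg r)) hCRpos.le]
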